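/- For every continuous function f : ℝ → ℝ, the function u(s) := (∫₀^s tanh⁻²(s') ∫₀^{s'} tanh(s'') f(s'') ds'' ds') · tanh(s) satisfies u''(s) + 2 cosh⁻²(s) u(s) = f(s) for all s ∈ ℝ. -/

import Mathlib

/-!
The functions `tanh` and `ψ x = x tanh x - 1` solve `L₀ y = 0` and have Wronskian
`tanh · ψ' - tanh' · ψ = tanh² + cosh⁻² = 1`, so variation of parameters gives the solution
`v = ψ ∫₀ tanh f - tanh ∫₀ ψ f` of `L₀ v = f`. It remains to see that `u = v`, i.e. that the
outer integral equals `v / tanh`. By the Wronskian identity again, `(v / tanh)' = tanh⁻² ∫₀ tanh f`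
away from `0`, and `v / tanh → 0` at `0` because `∫₀ˣ tanh f = O(x tanh x)`; this continuity
lets the fundamental theorem of calculus run across the singular point.
-/

open Real Set Filter Topology MeasureTheory intervalIntegral

section VariationOfParameters

variable {φ ψ φ' ψ' q f : ℝ → ℝ}

theorem hasDerivAt_integral_mul (hφ : Continuous φ) (hf : Continuous f) (a x : ℝ) :
    HasDerivAt (fun x => ∫ t in a..x, φ t * f t) (φ x * f x) x :=
  ((hφ.mul hf).integral_hasStrictDerivAt a x).hasDerivAt

theorem continuous_integral_mul (hφ : Continuous φ) (hf : Continuous f) (a : ℝ) :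
    Continuous fun x => ∫ t in a..x, φ t * f t :=
  Differentiable.continuous fun x => (hasDerivAt_integral_mul hφ hf a x).differentiableAt

variable {a x : ℝ}

noncomputable def variationOfParameters (φ ψ f : ℝ → ℝ) (a x : ℝ) : ℝ :=
  ψ x * (∫ t in a..x, φ t * f t) - φ x * ∫ t in a..x, ψ t * f t

theorem hasDerivAt_variationOfParameters (hφ : ∀ x, HasDerivAt φ (φ' x) x)
    (hψ : ∀ x, HasDerivAt ψ (ψ' x) x) (hf : Continuous f) (x : ℝ) :
    HasDerivAt (variationOfParameters φ ψ f a)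
      (ψ' x * (∫ t in a..x, φ t * f t) - φ' x * ∫ t in a..x, ψ t * f t) x := by
  have hφc : Continuous φ := Differentiable.continuous fun x => (hφ x).differentiableAt
  have hψc : Continuous ψ := Differentiable.continuous fun x => (hψ x).differentiableAt
  have hA := hasDerivAt_integral_mul hφc hf a x
  have hB := hasDerivAt_integral_mul hψc hf a x
  exact (((hψ x).mul hA).sub ((hφ x).mul hB)).congr_deriv (by ring)

theorem deriv_deriv_variationOfParameters_add_mul (hφ : ∀ x, HasDerivAt φ (φ' x) x)
    (hψ : ∀ x, HasDerivAt ψ (ψ' x) x) (hφ' : HasDerivAt φ' (-(q x * φ x)) x)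
    (hψ' : HasDerivAt ψ' (-(q x * ψ x)) x) (hW : φ x * ψ' x - φ' x * ψ x = 1)
    (hf : Continuous f) :
    deriv (deriv (variationOfParameters φ ψ f a)) x + q x * variationOfParameters φ ψ f a x =
      f x := by
  have hφc : Continuous φ := Differentiable.continuous fun x => (hφ x).differentiableAt
  have hψc : Continuous ψ := Differentiable.continuous fun x => (hψ x).differentiableAt
  have hA := hasDerivAt_integral_mul hφc hf a x
  have hB := hasDerivAt_integral_mul hψc hf a x
  have hv' : HasDerivAt
      (fun x => ψ' x * (∫ t in a..x, φ t * f t) - φ' x * ∫ t in a..x, ψ t * f t) _ x := (hψ'.mul hA).sub (hφ'.mul hB)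
  rw [funext fun x => (hasDerivAt_variationOfParameters (a := a) hφ hψ hf x).deriv, hv'.deriv,
    variationOfParameters]
  linear_combination f x * hW

theorem hasDerivAt_variationOfParameters_div (hφ : ∀ x, HasDerivAt φ (φ' x) x)
    (hψ : ∀ x, HasDerivAt ψ (ψ' x) x) (hW : φ x * ψ' x - φ' x * ψ x = 1) (hf : Continuous f)
    (hx : φ x ≠ 0) :
    HasDerivAt (fun y => variationOfParameters φ ψ f a y / φ y)
      ((φ x ^ 2)⁻¹ * ∫ t in a..x, φ t * f t) x := by
  refine ((hasDerivAt_variationOfParameters hφ hψ hf x).div (hφ x) hx).congr_deriv ?_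
  field_simp
  rw [variationOfParameters]
  linear_combination (∫ t in a..x, φ t * f t) * hW

end VariationOfParameters

namespace Real

theorem hasDerivAt_tanh (x : ℝ) : HasDerivAt tanh ((cosh x ^ 2)⁻¹) x := by
  have h := (hasDerivAt_sinh x).div (hasDerivAt_cosh x) (cosh_pos x).ne'
  rw [funext tanh_eq_sinh_div_cosh]
  refine h.congr_deriv ?_
  field_simp
  linear_combination cosh_sq x

@[fun_prop]
theorem continuous_tanh : Continuous tanh :=
  Differentiable.continuous fun x => (hasDerivAt_tanh x).differentiableAt

theorem strictMono_tanh : StrictMono tanh :=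
  strictMono_of_hasDerivAt_pos hasDerivAt_tanh fun x => by positivity

theorem tanh_eq_zero_iff {x : ℝ} : tanh x = 0 ↔ x = 0 :=
  strictMono_tanh.injective.eq_iff' tanh_zero

theorem abs_tanh (x : ℝ) : |tanh x| = tanh |x| := by
  rcases le_total 0 x with hx | hx
  · rw [abs_of_nonneg hx, abs_of_nonneg (tanh_zero ▸ strictMono_tanh.monotone hx)]
  · rw [abs_of_nonpos hx, abs_of_nonpos (tanh_zero ▸ strictMono_tanh.monotone hx), tanh_neg]

theorem abs_tanh_le_abs_tanh {x y : ℝ} (h : |x| ≤ |y|) : |tanh x| ≤ |tanh y| := by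
  simpa only [abs_tanh] using strictMono_tanh.monotone h

theorem abs_div_tanh_le_cosh (x : ℝ) : |x / tanh x| ≤ cosh x := by
  rw [tanh_eq_sinh_div_cosh, div_div_eq_mul_div, abs_div, abs_mul, abs_of_pos (cosh_pos x),
    mul_comm]
  refine div_le_of_le_mul₀ (abs_nonneg _) (cosh_pos x).le ?_
  rw [abs_sinh]
  exact mul_le_mul_of_nonneg_left (self_le_sinh_iff.2 (abs_nonneg x)) (cosh_pos x).le

theorem hasDerivAt_inv_cosh_sq (x : ℝ) :
    HasDerivAt (fun x => (cosh x ^ 2)⁻¹) (-(2 * (cosh x ^ 2)⁻¹ * tanh x)) x := by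
  refine (((hasDerivAt_cosh x).pow 2).inv (pow_ne_zero 2 (cosh_pos x).ne')).congr_deriv ?_
  rw [tanh_eq_sinh_div_cosh, Pi.pow_apply]
  field_simp
  ring

end Real

section L0

variable {f : ℝ → ℝ}

theorem hasDerivAt_mul_tanh_sub_one (x : ℝ) :
    HasDerivAt (fun x => x * tanh x - 1) (tanh x + x * (cosh x ^ 2)⁻¹) x :=
  (((hasDerivAt_id x).mul (hasDerivAt_tanh x)).sub_const 1).congr_deriv (by simp)

theorem hasDerivAt_tanh_add_mul_inv_cosh_sq (x : ℝ) :
    HasDerivAt (fun x => tanh x + x * (cosh x ^ 2)⁻¹)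
      (-(2 * (cosh x ^ 2)⁻¹ * (x * tanh x - 1))) x :=
  ((hasDerivAt_tanh x).add ((hasDerivAt_id x).mul (hasDerivAt_inv_cosh_sq x))).congr_deriv
    (by simp only [id]; ring)

theorem wronskian_tanh_mul_tanh_sub_one (x : ℝ) :
    tanh x * (tanh x + x * (cosh x ^ 2)⁻¹) - (cosh x ^ 2)⁻¹ * (x * tanh x - 1) = 1 := by
  rw [tanh_eq_sinh_div_cosh]
  field_simp
  linear_combination -cosh x * cosh_sq x

theorem abs_integral_tanh_mul_div_tanh_le {M x : ℝ} (hM : ∀ t ∈ uIoc 0 x, |f t| ≤ M) :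
    |(∫ t in 0..x, tanh t * f t) / tanh x| ≤ M * |x| := by
  rcases eq_or_ne x 0 with rfl | hx
  · simp
  have htanh : 0 < |tanh x| := abs_pos.2 (tanh_eq_zero_iff.not.2 hx)
  have hbound : ∀ t ∈ uIoc 0 x, ‖tanh t * f t‖ ≤ |tanh x| * M := fun t ht => by
    have htx : |t| ≤ |x| := by simpa using abs_sub_left_of_mem_uIcc (uIoc_subset_uIcc ht)
    rw [norm_mul, norm_eq_abs, norm_eq_abs]
    exact mul_le_mul (abs_tanh_le_abs_tanh htx) (hM t ht) (abs_nonneg _) (abs_nonneg _)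
  rw [abs_div, div_le_iff₀ htanh]
  calc |∫ t in 0..x, tanh t * f t| ≤ |tanh x| * M * |x - 0| :=
        norm_integral_le_of_norm_le_const hbound
    _ = M * |x| * |tanh x| := by rw [sub_zero]; ring

theorem tendsto_integral_tanh_mul_div_tanh (hf : Continuous f) :
    Tendsto (fun x => (∫ t in 0..x, tanh t * f t) / tanh x) (𝓝 0) (𝓝 0) := by
  obtain ⟨M, hM⟩ :=
    (isCompact_Icc (a := -1) (b := 1)).exists_bound_of_continuousOn hf.continuousOn
  have hlim : Tendsto (fun x : ℝ => M * |x|) (𝓝 0) (𝓝 0) := by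
    simpa using ((by fun_prop : Continuous fun x : ℝ => M * |x|).tendsto 0)
  refine squeeze_zero_norm' ?_ hlim
  filter_upwards [Icc_mem_nhds neg_one_lt_zero one_pos] with x hx
  refine abs_integral_tanh_mul_div_tanh_le fun t ht => hM t ?_
  exact uIcc_subset_Icc (by norm_num) hx (uIoc_subset_uIcc ht)

theorem intervalIntegrable_inv_tanh_sq_mul_integral (hf : Continuous f) (s : ℝ) :
    IntervalIntegrable (fun x => (tanh x ^ 2)⁻¹ * ∫ t in 0..x, tanh t * f t) volume 0 s := by
  obtain ⟨M, hM⟩ :=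
    (isCompact_uIcc (a := 0) (b := s)).exists_bound_of_continuousOn hf.continuousOn
  have hM0 : 0 ≤ M := (norm_nonneg _).trans (hM 0 left_mem_uIcc)
  refine IntervalIntegrable.mono_fun' (g := fun _ => M * cosh s) intervalIntegrable_const ?_ ?_
  · exact ((continuous_tanh.measurable.pow_const 2).inv.mul (continuous_integral_mul continuous_tanh hf 0).measurable).aestronglyMeasurable
  filter_upwards [ae_restrict_mem measurableSet_uIoc] with x hx
  have hxs : |x| ≤ |s| := by simpa using abs_sub_left_of_mem_uIcc (uIoc_subset_uIcc hx)
  have hMx : ∀ t ∈ uIoc 0 x, |f t| ≤ M := fun t ht =>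
    hM t (uIcc_subset_uIcc left_mem_uIcc (uIoc_subset_uIcc hx) (uIoc_subset_uIcc ht))
  calc ‖(tanh x ^ 2)⁻¹ * ∫ t in 0..x, tanh t * f t‖
      = |(∫ t in 0..x, tanh t * f t) / tanh x| * |tanh x|⁻¹ := by
        rw [norm_eq_abs, ← abs_inv, ← abs_mul]; ring_nf
    _ ≤ M * |x| * |tanh x|⁻¹ := by gcongr; exact abs_integral_tanh_mul_div_tanh_le hMx
    _ = M * |x / tanh x| := by rw [abs_div]; ring
    _ ≤ M * cosh x := by gcongr; exact abs_div_tanh_le_cosh x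
    _ ≤ M * cosh s := by gcongr; exact cosh_le_cosh.2 hxs

theorem integral_inv_tanh_sq_mul_integral (hf : Continuous f) (s : ℝ) :
    ∫ x in 0..s, (tanh x ^ 2)⁻¹ * ∫ t in 0..x, tanh t * f t =
      variationOfParameters tanh (fun x => x * tanh x - 1) f 0 s / tanh s := by
  set W := fun y => variationOfParameters tanh (fun x => x * tanh x - 1) f 0 y / tanh y
  have hW' : ∀ x ≠ 0, HasDerivAt W ((tanh x ^ 2)⁻¹ * ∫ t in 0..x, tanh t * f t) x := fun x hx =>
    hasDerivAt_variationOfParameters_div hasDerivAt_tanh hasDerivAt_mul_tanh_sub_one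
      (wronskian_tanh_mul_tanh_sub_one x) hf (tanh_eq_zero_iff.not.2 hx)
  have hW_eq : W = fun x => (x * tanh x - 1) * ((∫ t in 0..x, tanh t * f t) / tanh x) -
      ∫ t in 0..x, (t * tanh t - 1) * f t := by
    funext x
    rcases eq_or_ne x 0 with rfl | hx
    · simp [W, variationOfParameters] -- both sides vanish, using `y / 0 = 0`
    · have := tanh_eq_zero_iff.not.2 hx
      simp only [W, variationOfParameters]
      field_simp
  have hW : Continuous W := by
    refine continuous_iff_continuousAt.2 fun x => ?_
    rcases eq_or_ne x 0 with rfl | hx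
    · have hψ : Continuous fun x => x * tanh x - 1 := by fun_prop
      rw [hW_eq, ContinuousAt]
      simpa using ((hψ.tendsto 0).mul (tendsto_integral_tanh_mul_div_tanh hf)).sub
        ((continuous_integral_mul hψ hf 0).tendsto 0)
    · exact (hW' x hx).continuousAt
  rw [integral_eq_sub_of_hasDeriv_right hW.continuousOn
    (fun x hx => (hW' x ?_).hasDerivWithinAt) (intervalIntegrable_inv_tanh_sq_mul_integral hf s)]
  · simp [W, variationOfParameters]
  · rintro rfl
    rcases le_total 0 s with h | h <;> simp_all

end L0

theorem L0_right_inverse (f : ℝ → ℝ) (hf : Continuous f) :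
    let u : ℝ → ℝ := fun s =>
      (∫ s' in (0:ℝ)..s, (tanh s' ^ 2)⁻¹ * ∫ s'' in (0:ℝ)..s', tanh s'' * f s'') * tanh s
    ∀ s : ℝ, deriv (deriv u) s + 2 * (cosh s ^ 2)⁻¹ * u s = f s := by
  intro u s
  have hu : u = variationOfParameters tanh (fun x => x * tanh x - 1) f 0 := by
    funext x
    simp only [u, integral_inv_tanh_sq_mul_integral hf]
    exact div_mul_cancel_of_imp fun hx => by simp [tanh_eq_zero_iff.1 hx, variationOfParameters]
  rw [hu]
  exact deriv_deriv_variationOfParameters_add_mul (q := fun x => 2 * (cosh x ^ 2)⁻¹)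
    hasDerivAt_tanh hasDerivAt_mul_tanh_sub_one (hasDerivAt_inv_cosh_sq s) (hasDerivAt_tanh_add_mul_inv_cosh_sq s)
    (wronskian_tanh_mul_tanh_sub_one s) hf
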